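/- arXiv:1512.06655 — 2 statements merged into one kernel-verified Lean document; each statement's English description precedes it below -/
import Mathlib

section
/- Let M be a matroid of rank r on a finite ground set E and let 𝓧 be a collection of subsets of E. Then 𝓧 is complete with respect to M if and only if there is an erection N of M such that 𝓧 = { X ⊆ E : r_N(X) ≤ r }, where r_N denotes the rank function of N. -/
open Matroid Set Filter Real

namespace PavingEnum

/-- The rank of a matroid: the largest cardinality of a base. -/
noncomputable def mrk {α : Type*} (M : Matroid α) : ℕ :=
  sSup {n : ℕ | ∃ B, M.IsBase B ∧ B.ncard = n}

/-- The rank of a set in a matroid: the largest cardinality of an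
independent subset of the set. -/
noncomputable def mrnk {α : Type*} (M : Matroid α) (X : Set α) : ℕ :=
  sSup {n : ℕ | ∃ I, I ⊆ X ∧ M.Indep I ∧ I.ncard = n}

/-- A circuit is a minimal dependent set. -/
def IsCircuit {α : Type*} (M : Matroid α) (C : Set α) : Prop :=
  M.Dep C ∧ ∀ D, D ⊂ C → M.Indep D

/-- A matroid of rank `r` is paving if every circuit has cardinality at least `r`. -/
def Paving {α : Type*} (M : Matroid α) : Prop :=
  ∀ C, IsCircuit M C → (mrk M : ℕ∞) ≤ C.encard

/-- A matroid is sparse paving if both it and its dual are paving. -/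
def SparsePaving {α : Type*} (M : Matroid α) : Prop :=
  Paving M ∧ Paving M✶

/-- `numMatroids n r` : the number of matroids on the ground set `{1, …, n}` of rank `r`. -/
noncomputable def numMatroids (n r : ℕ) : ℕ :=
  {M : Matroid (Fin n) | M.E = Set.univ ∧ mrk M = r}.ncard

/-- `numPaving n r` : the number of paving matroids on `{1, …, n}` of rank `r`. -/
noncomputable def numPaving (n r : ℕ) : ℕ :=
  {M : Matroid (Fin n) | M.E = Set.univ ∧ mrk M = r ∧ Paving M}.ncard

/-- `numSparsePaving n r` : the number of sparse paving matroids on `{1, …, n}` of rank `r`. -/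
noncomputable def numSparsePaving (n r : ℕ) : ℕ :=
  {M : Matroid (Fin n) | M.E = Set.univ ∧ mrk M = r ∧ SparsePaving M}.ncard

end PavingEnum

namespace PavingEnum

/-- `T` is the truncation of `N`: same ground set, and the independent sets of `T`
are exactly the independent sets of `N` of cardinality at most `rk N − 1`. -/
def IsTruncationOf {α : Type*} (T N : Matroid α) : Prop :=
  T.E = N.E ∧ ∀ I : Set α, T.Indep I ↔ (N.Indep I ∧ I.ncard + 1 ≤ mrk N)

/-- `N` is an erection of `M` if `T(N) = M` or `N = M`. -/
def IsErection {α : Type*} (N M : Matroid α) : Prop :=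
  IsTruncationOf M N ∨ N = M

/-- A set `X` is `k`-closed in `M` if it contains the closure of each of its
subsets of cardinality at most `k`. -/
def KClosed {α : Type*} (M : Matroid α) (k : ℕ) (X : Set α) : Prop :=
  ∀ Y ⊆ X, Y.encard ≤ (k : ℕ∞) → M.closure Y ⊆ X

/-- The `k`-closure of a set: the intersection of all `k`-closed sets containing it. -/
def kClosure {α : Type*} (M : Matroid α) (k : ℕ) (X : Set α) : Set α :=
  ⋂₀ {Y | KClosed M k Y ∧ X ⊆ Y}

/-- A flat `F` of `M` of rank `k` is essential if the restriction `M|F` has a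
nontrivial erection, i.e. there is a matroid on ground set `F` of rank `k+1`
whose truncation is `M|F`. -/
def IsEssentialFlat {α : Type*} (M : Matroid α) (F : Set α) : Prop :=
  M.IsFlat F ∧ ∃ N : Matroid α, N.E = F ∧ mrk N = mrnk M F + 1 ∧ IsTruncationOf (M ↾ F) N

end PavingEnum

open PavingEnum

/-- A collection 𝓧 of subsets of the ground set of `M` is complete with respect to `M`:
(i) 𝓧 is closed under taking subsets, (ii) every basis of `M` is in 𝓧, (iii) 𝓧 is
closed under the (r−1)-closure, and (iv) X ∪ Y ∈ 𝓧 whenever X, Y ∈ 𝓧 and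
r_M(X ∩ Y) = r, where r is the rank of `M`. -/
def CompleteWithRespectTo {α : Type*} (M : Matroid α) (𝓧 : Set (Set α)) : Prop :=
  (∀ X ∈ 𝓧, ∀ Y ⊆ X, Y ∈ 𝓧) ∧
  (∀ B : Set α, M.IsBase B → B ∈ 𝓧) ∧
  (∀ X ∈ 𝓧, kClosure M (mrk M - 1) X ∈ 𝓧) ∧
  (∀ X ∈ 𝓧, ∀ Y ∈ 𝓧, mrnk M (X ∩ Y) = mrk M → X ∪ Y ∈ 𝓧)

/-!
If `M` is the truncation of `N`, then `r_M = min r_N r`. Hence a set of `M`-rank below `r` has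
the same closure in `M` as in `N`, so `cl_N X` is `(r-1)`-closed in `M` and contains the
`(r-1)`-closure of `X`; together with submodularity of `r_N` this shows that the sets of
`N`-rank at most `r` form a complete collection.

Conversely, let `𝓧` be complete and miss some subset of `E`. Every set of `M`-rank below `r`
lies in the `(r-1)`-closure of a basis of it, hence in `𝓧`; so the circuits of `M` outside `𝓧`
are spanning and have `r + 1` elements. The erection is the matroid whose independent sets are
those of `M` together with these circuits. Its augmentation axiom rests on Crapo's lemma: if
`B` is a basis and `J ∉ 𝓧`, some `e ∈ J` makes `B + e` a circuit outside `𝓧`. Otherwise, as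
`B + e` is a circuit for every `e ∈ E` outside the `(r-1)`-closure `Z` of `B`, each `e ∈ J`
lies in `Z` or has `B + e ∈ 𝓧`; so `J ⊆ Z ∪ {e | B + e ∈ 𝓧}`, which is in `𝓧` by repeated use
of the union axiom, all these sets containing `B`.
-/

namespace Matroid

variable {α : Type*} {M : Matroid α} {X Y I B C : Set α} {e : α} {n : ℕ}

lemma mrnk_le (h : ∀ I ⊆ X, M.Indep I → I.ncard ≤ n) : mrnk M X ≤ n :=
  csSup_le ⟨0, ∅, empty_subset _, M.empty_indep, ncard_empty _⟩
    (by rintro _ ⟨I, hIX, hI, rfl⟩; exact h I hIX hI)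

lemma IsBase.ncard_eq_mrk (hB : M.IsBase B) : B.ncard = mrk M := by
  have hcard : {n : ℕ | ∃ B, M.IsBase B ∧ B.ncard = n} = {B.ncard} := by
    ext n
    constructor
    · rintro ⟨B', hB', rfl⟩
      exact hB'.ncard_eq_ncard_of_isBase hB
    · rintro rfl
      exact ⟨B, hB, rfl⟩
  rw [mrk, hcard, csSup_singleton]

section RankFinite

variable [M.RankFinite]

lemma IsBasis'.ncard_eq_mrnk (hI : M.IsBasis' I X) : I.ncard = mrnk M X := by
  refine (IsGreatest.csSup_eq (s := {n : ℕ | ∃ I, I ⊆ X ∧ M.Indep I ∧ I.ncard = n})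
    ⟨⟨I, hI.subset, hI.indep, rfl⟩, ?_⟩).symm
  rintro _ ⟨J, hJX, hJ, rfl⟩
  have hJI := hJ.encard_le_eRk_of_subset hJX
  rwa [← hI.encard_eq_eRk, ← hJ.finite.cast_ncard_eq, ← hI.indep.finite.cast_ncard_eq,
    Nat.cast_le] at hJI

lemma cast_mrnk (X : Set α) : (mrnk M X : ℕ∞) = M.eRk X := by
  obtain ⟨I, hI⟩ := M.exists_isBasis' X
  rw [← hI.ncard_eq_mrnk, hI.indep.finite.cast_ncard_eq, hI.encard_eq_eRk]

lemma cast_mrk : (mrk M : ℕ∞) = M.eRank := by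
  obtain ⟨B, hB⟩ := M.exists_isBase
  rw [← hB.ncard_eq_mrk, hB.finite.cast_ncard_eq, hB.encard_eq_eRank]

lemma Indep.ncard_le_mrnk (hI : M.Indep I) (hIX : I ⊆ X) : I.ncard ≤ mrnk M X := by
  have h := hI.encard_le_eRk_of_subset hIX
  rwa [← cast_mrnk, ← hI.finite.cast_ncard_eq, Nat.cast_le] at h

lemma Indep.ncard_le_mrk (hI : M.Indep I) : I.ncard ≤ mrk M := by
  have h := hI.encard_le_eRank
  rwa [← cast_mrk, ← hI.finite.cast_ncard_eq, Nat.cast_le] at h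

lemma mrnk_mono (hXY : X ⊆ Y) : mrnk M X ≤ mrnk M Y := by
  have h := M.eRk_mono hXY
  rwa [← cast_mrnk, ← cast_mrnk, Nat.cast_le] at h

lemma mrnk_le_mrk (X : Set α) : mrnk M X ≤ mrk M := by
  have h := M.eRk_le_eRank X
  rwa [← cast_mrnk, ← cast_mrk, Nat.cast_le] at h

lemma cast_mrnk_le_encard (X : Set α) : (mrnk M X : ℕ∞) ≤ X.encard :=
  (cast_mrnk (M := M) X).trans_le (M.eRk_le_encard X)

lemma mrnk_closure (X : Set α) : mrnk M (M.closure X) = mrnk M X := by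
  rw [← Nat.cast_inj (R := ℕ∞), cast_mrnk, cast_mrnk, eRk_closure_eq]

lemma mrnk_inter_add_mrnk_union_le (X Y : Set α) :
    mrnk M (X ∩ Y) + mrnk M (X ∪ Y) ≤ mrnk M X + mrnk M Y := by
  have h := M.eRk_inter_add_eRk_union_le X Y
  rwa [← cast_mrnk, ← cast_mrnk, ← cast_mrnk, ← cast_mrnk, ← Nat.cast_add, ← Nat.cast_add,
    Nat.cast_le] at h

lemma mrnk_insert_of_mem_closure (he : e ∈ M.closure X) : mrnk M (insert e X) = mrnk M X := by
  rw [← Nat.cast_inj (R := ℕ∞), cast_mrnk, cast_mrnk, ← eRk_insert_closure_eq,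
    insert_eq_of_mem he, eRk_closure_eq]

lemma mrnk_insert_of_notMem_closure (he : e ∈ M.E \ M.closure X) :
    mrnk M (insert e X) = mrnk M X + 1 := by
  rw [← Nat.cast_inj (R := ℕ∞), cast_mrnk, Nat.cast_add, cast_mrnk, Nat.cast_one,
    eRk_insert_eq_add_one he]

lemma Indep.isBase_of_mrk_le_ncard (hI : M.Indep I) (h : mrk M ≤ I.ncard) :
    M.IsBase I := by
  obtain ⟨B, hB, hIB⟩ := hI.exists_isBase_superset
  rwa [eq_of_subset_of_ncard_le hIB (hB.ncard_eq_mrk ▸ h) hB.finite]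

lemma IsCircuit.ncard_eq_mrnk_add_one (hC : M.IsCircuit C) :
    C.ncard = mrnk M C + 1 := by
  rw [← Nat.cast_inj (R := ℕ∞), hC.finite.cast_ncard_eq, Nat.cast_add, cast_mrnk, Nat.cast_one,
    hC.eRk_add_one_eq]

end RankFinite

end Matroid

namespace PavingEnum

variable {α : Type*} {M N : Matroid α} {𝓧 : Set (Set α)} {X Y J B I C : Set α} {e : α} {k : ℕ}

lemma subset_kClosure : X ⊆ kClosure M k X :=
  fun _ hx => mem_sInter.2 fun _ hY => hY.2 hx

lemma kClosure_subset (hY : KClosed M k Y) (hXY : X ⊆ Y) : kClosure M k X ⊆ Y :=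
  sInter_subset_of_mem ⟨hY, hXY⟩

lemma kClosed_kClosure : KClosed M k (kClosure M k X) :=
  fun Y hYX hY _ he => mem_sInter.2 fun _ hZ => hZ.1 Y (hYX.trans (kClosure_subset hZ.1 hZ.2)) hY he

lemma closure_subset_kClosure (hYX : Y ⊆ X) (hY : Y.encard ≤ k) :
    M.closure Y ⊆ kClosure M k X :=
  kClosed_kClosure Y (hYX.trans subset_kClosure) hY

lemma kClosure_subset_ground (hX : X ⊆ M.E) : kClosure M k X ⊆ M.E :=
  kClosure_subset (fun Y _ _ => M.closure_subset_ground Y) hX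

lemma isCircuit_insert_of_notMem_kClosure [M.RankFinite] (hB : M.IsBase B) (he : e ∈ M.E)
    (heB : e ∉ kClosure M k B) (hk : mrk M ≤ k + 1) : M.IsCircuit (insert e B) := by
  refine hB.indep.insert_isCircuit_of_forall (fun h => heB (subset_kClosure h))
    (hB.closure_eq ▸ he) fun f hf hcl => heB (closure_subset_kClosure sdiff_subset ?_ hcl)
  rw [← hB.finite.sdiff.cast_ncard_eq, ncard_sdiff_singleton_of_mem hf, hB.ncard_eq_mrk]
  exact_mod_cast (by omega)

section Truncation

variable [M.Finite] (hT : IsTruncationOf M N)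
include hT

lemma IsTruncationOf.finite : N.Finite :=
  ⟨hT.1 ▸ M.ground_finite⟩

lemma IsTruncationOf.mrk_eq : mrk N = mrk M + 1 := by
  have := hT.finite
  obtain ⟨B, hB⟩ := M.exists_isBase
  refine le_antisymm ?_ (hB.ncard_eq_mrk ▸ ((hT.2 B).1 hB.indep).2)
  by_contra! hlt
  obtain ⟨B', hB'⟩ := N.exists_isBase
  obtain ⟨S, hSB', hS⟩ := exists_subset_card_eq (s := B') (n := mrk M + 1)
    (by rw [hB'.ncard_eq_mrk]; omega)
  have hSM : M.Indep S := (hT.2 S).2 ⟨hB'.indep.subset hSB', by omega⟩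
  have := hSM.ncard_le_mrk
  omega

lemma IsTruncationOf.indep_iff : M.Indep I ↔ N.Indep I ∧ I.ncard ≤ mrk M := by
  rw [hT.2, hT.mrk_eq, Nat.add_le_add_iff_right]

lemma IsTruncationOf.mrnk_eq (X : Set α) : mrnk M X = min (mrnk N X) (mrk M) := by
  have := hT.finite
  refine le_antisymm (le_min (mrnk_le fun I hIX hI => (hT.indep_iff.1 hI).1.ncard_le_mrnk hIX)
    (mrnk_le_mrk X)) ?_
  obtain ⟨I, hI⟩ := N.exists_isBasis' X
  rcases le_total I.ncard (mrk M) with hIr | hrI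
  · calc min (mrnk N X) (mrk M) ≤ mrnk N X := min_le_left _ _
      _ = I.ncard := hI.ncard_eq_mrnk.symm
      _ ≤ mrnk M X := (hT.indep_iff.2 ⟨hI.indep, hIr⟩).ncard_le_mrnk hI.subset
  · obtain ⟨S, hSI, hS⟩ := exists_subset_card_eq hrI
    calc min (mrnk N X) (mrk M) ≤ mrk M := min_le_right _ _
      _ = S.ncard := hS.symm
      _ ≤ mrnk M X := (hT.indep_iff.2 ⟨hI.indep.subset hSI, hS.le⟩).ncard_le_mrnk
          (hSI.trans hI.subset)

lemma IsTruncationOf.closure_subset_closure (hY : Y.encard < mrk M) :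
    M.closure Y ⊆ N.closure Y := by
  have := hT.finite
  intro e he
  by_contra heN
  have hYN : mrnk N Y < mrk M := by exact_mod_cast (cast_mrnk_le_encard Y).trans_lt hY
  have hNe := mrnk_insert_of_notMem_closure ⟨hT.1 ▸ M.closure_subset_ground Y he, heN⟩
  have hMe := mrnk_insert_of_mem_closure he
  rw [hT.mrnk_eq, hT.mrnk_eq, hNe] at hMe
  omega

lemma complete_of_isTruncationOf (hr : 1 ≤ mrk M) :
    CompleteWithRespectTo M {X | X ⊆ M.E ∧ mrnk N X ≤ mrk M} := by
  have := hT.finite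
  refine ⟨?_, fun B hB => ⟨hB.subset_ground, ?_⟩, ?_, ?_⟩
  · rintro X ⟨hXE, hXr⟩ Y hYX
    exact ⟨hYX.trans hXE, (mrnk_mono hYX).trans hXr⟩
  · have hB' := cast_mrnk_le_encard (M := N) B
    rwa [← hB.finite.cast_ncard_eq, hB.ncard_eq_mrk, Nat.cast_le] at hB'
  · rintro X ⟨hXE, hXr⟩
    have hkcl : KClosed M (mrk M - 1) (N.closure X) := fun Y hYX hY =>
      (hT.closure_subset_closure (hY.trans_lt (by exact_mod_cast Nat.sub_one_lt_of_lt hr))).trans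
        (N.closure_subset_closure_of_subset_closure hYX)
    have hsub := kClosure_subset hkcl (N.subset_closure X (hT.1 ▸ hXE))
    exact ⟨hsub.trans (hT.1 ▸ N.closure_subset_ground X),
      (mrnk_mono hsub).trans ((mrnk_closure X).trans_le hXr)⟩
  · rintro X ⟨hXE, hXr⟩ Y ⟨hYE, hYr⟩ hXY
    have hsubmod := mrnk_inter_add_mrnk_union_le (M := N) X Y
    have hXYN := hT.mrnk_eq (X ∩ Y)
    exact ⟨union_subset hXE hYE, by omega⟩

end Truncation

lemma complete_setOf_subset_ground [M.RankFinite] :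
    CompleteWithRespectTo M {X | X ⊆ M.E ∧ mrnk M X ≤ mrk M} :=
  ⟨fun _ hX _ hYX => ⟨hYX.trans hX.1, mrnk_le_mrk _⟩,
    fun _ hB => ⟨hB.subset_ground, mrnk_le_mrk _⟩,
    fun _ hX => ⟨kClosure_subset_ground hX.1, mrnk_le_mrk _⟩,
    fun _ hX _ hY _ => ⟨union_subset hX.1 hY.1, mrnk_le_mrk _⟩⟩

def ErectionIndep (M : Matroid α) (𝓧 : Set (Set α)) (I : Set α) : Prop :=
  M.Indep I ∨ M.IsCircuit I ∧ I ∉ 𝓧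

namespace CompleteWithRespectTo

variable (h𝓧 : CompleteWithRespectTo M 𝓧)
include h𝓧

lemma indep_mem (hI : M.Indep I) : I ∈ 𝓧 := by
  obtain ⟨B, hB, hIB⟩ := hI.exists_isBase_superset
  exact h𝓧.1 B (h𝓧.2.1 B hB) I hIB

lemma mem_of_mrnk_lt [M.RankFinite] (hXE : X ⊆ M.E) (hX : mrnk M X < mrk M) : X ∈ 𝓧 := by
  obtain ⟨I, hI⟩ := M.exists_isBasis X
  have hI_small : I.encard ≤ (mrk M - 1 : ℕ) := by
    rw [← hI.indep.finite.cast_ncard_eq, hI.isBasis'.ncard_eq_mrnk]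
    exact_mod_cast (by omega)
  exact h𝓧.1 _ (h𝓧.2.2.1 I (h𝓧.indep_mem hI.indep)) X
    (hI.subset_closure.trans (closure_subset_kClosure subset_rfl hI_small))

lemma union_mem [M.RankFinite] (hB : M.IsBase B) (hX : X ∈ 𝓧) (hBX : B ⊆ X) {A : Set α}
    (hA : A.Finite) (hAX : ∀ e ∈ A, insert e B ∈ 𝓧) : X ∪ A ∈ 𝓧 := by
  refine hA.induction_on_subset (motive := fun A' _ => X ∪ A' ∈ 𝓧) _ (by simpa using hX) ?_
  intro a A' haA _ _ hA'
  have hinter : mrnk M ((X ∪ A') ∩ insert a B) = mrk M :=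
    le_antisymm (mrnk_le_mrk _) (hB.ncard_eq_mrk ▸ hB.indep.ncard_le_mrnk
      (subset_inter (hBX.trans subset_union_left) (subset_insert a B)))
  have hunion := h𝓧.2.2.2 _ hA' _ (hAX a haA) hinter
  convert hunion using 1
  ext x
  have := @hBX x
  simp only [mem_union, mem_insert_iff]
  tauto

variable [M.Finite]

lemma exists_isCircuit_insert_notMem (hB : M.IsBase B) (hJE : J ⊆ M.E) (hJ : J ∉ 𝓧) :
    ∃ e ∈ J, M.IsCircuit (insert e B) ∧ insert e B ∉ 𝓧 := by
  by_contra! hcon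
  set Z := kClosure M (mrk M - 1) B
  have hZ : Z ∪ {e ∈ J | insert e B ∈ 𝓧} ∈ 𝓧 :=
    h𝓧.union_mem hB (h𝓧.2.2.1 B (h𝓧.2.1 B hB)) subset_kClosure
      (M.ground_finite.subset (sep_subset _ _ |>.trans hJE)) fun e he => he.2
  refine hJ (h𝓧.1 _ hZ J fun e he => ?_)
  by_cases heZ : e ∈ Z
  · exact Or.inl heZ
  · exact Or.inr ⟨he, hcon e he (isCircuit_insert_of_notMem_kClosure hB (hJE he) heZ (by omega))⟩

lemma ncard_eq_of_isCircuit_notMem (hC : M.IsCircuit C) (hC𝓧 : C ∉ 𝓧) :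
    C.ncard = mrk M + 1 := by
  have hCr : mrk M ≤ mrnk M C := not_lt.1 fun h => hC𝓧 (h𝓧.mem_of_mrnk_lt hC.subset_ground h)
  have := mrnk_le_mrk (M := M) C
  rw [hC.ncard_eq_mrnk_add_one]
  omega

lemma exists_isCircuit_subset_notMem (hXE : X ⊆ M.E) (hX : X ∉ 𝓧) :
    ∃ C ⊆ X, M.IsCircuit C ∧ C ∉ 𝓧 := by
  obtain ⟨I, hI⟩ := M.exists_isBasis X
  have hIB : M.IsBase I := hI.indep.isBase_of_mrk_le_ncard <| by
    rw [hI.isBasis'.ncard_eq_mrnk]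
    exact not_lt.1 fun h => hX (h𝓧.mem_of_mrnk_lt hXE h)
  obtain ⟨e, heX, hC, hC𝓧⟩ := h𝓧.exists_isCircuit_insert_notMem hIB hXE hX
  exact ⟨_, insert_subset heX hI.subset, hC, hC𝓧⟩

lemma ncard_le_of_erectionIndep (hI : ErectionIndep M 𝓧 I) : I.ncard ≤ mrk M + 1 :=
  hI.elim (fun hI => hI.ncard_le_mrk.trans (Nat.le_succ _))
    fun hI => (h𝓧.ncard_eq_of_isCircuit_notMem hI.1 hI.2).le

lemma erectionIndep_aug ⦃I J : Set α⦄ (hI : ErectionIndep M 𝓧 I) (hJ : ErectionIndep M 𝓧 J)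
    (hIJ : I.ncard < J.ncard) : ∃ e ∈ J, e ∉ I ∧ ErectionIndep M 𝓧 (insert e I) := by
  rcases hJ with hJ | ⟨hJ, hJ𝓧⟩
  · rcases hI with hI | ⟨hI, hI𝓧⟩
    · obtain ⟨e, he, heI⟩ := hI.augment hJ (by
        rwa [← hI.finite.cast_ncard_eq, ← hJ.finite.cast_ncard_eq, Nat.cast_lt])
      exact ⟨e, he.1, he.2, Or.inl heI⟩
    · have := hJ.ncard_le_mrk
      have := h𝓧.ncard_eq_of_isCircuit_notMem hI hI𝓧
      omega
  have hJc := h𝓧.ncard_eq_of_isCircuit_notMem hJ hJ𝓧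
  rcases hI with hI | ⟨hI, hI𝓧⟩
  swap
  · have := h𝓧.ncard_eq_of_isCircuit_notMem hI hI𝓧
    omega
  by_cases hIB : M.IsBase I
  · obtain ⟨e, heJ, hC, hC𝓧⟩ := h𝓧.exists_isCircuit_insert_notMem hIB hJ.subset_ground hJ𝓧
    exact ⟨e, heJ, fun heI => hC.not_indep (by rwa [insert_eq_of_mem heI]), Or.inr ⟨hC, hC𝓧⟩⟩
  obtain ⟨f, hf⟩ := hJ.nonempty
  have hJf : M.Indep (J \ {f}) := hJ.ssubset_indep (sdiff_singleton_ssubset.2 hf)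
  have hIr : I.ncard < mrk M := lt_of_le_of_ne hI.ncard_le_mrk fun h =>
    hIB (hI.isBase_of_mrk_le_ncard h.ge)
  obtain ⟨e, he, heI⟩ := hI.augment hJf (by
    rw [← hI.finite.cast_ncard_eq, ← hJf.finite.cast_ncard_eq, Nat.cast_lt,
      ncard_sdiff_singleton_of_mem hf]
    omega)
  exact ⟨e, he.1.1, he.2, Or.inl heI⟩

lemma exists_matroid_indep_iff_erectionIndep :
    ∃ N : Matroid α, N.E = M.E ∧ ∀ I, N.Indep I ↔ ErectionIndep M 𝓧 I :=
  ⟨(IndepMatroid.ofFinite M.ground_finite (ErectionIndep M 𝓧)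
    (Or.inl M.empty_indep)
    (fun I J hJ hIJ => by
      rcases hJ with hJ | ⟨hJ, hJ𝓧⟩
      · exact Or.inl (hJ.subset hIJ)
      obtain rfl | hIJ := hIJ.eq_or_ssubset
      · exact Or.inr ⟨hJ, hJ𝓧⟩
      · exact Or.inl (hJ.ssubset_indep hIJ))
    h𝓧.erectionIndep_aug
    (fun I hI => hI.elim Indep.subset_ground fun hC => hC.1.subset_ground)).matroid,
    rfl, fun _ => Iff.rfl⟩

lemma exists_isTruncationOf (h𝓧E : ∀ X ∈ 𝓧, X ⊆ M.E) (hJE : J ⊆ M.E) (hJ : J ∉ 𝓧) :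
    ∃ N, IsTruncationOf M N ∧ 𝓧 = {X | X ⊆ M.E ∧ mrnk N X ≤ mrk M} := by
  obtain ⟨N, hNE, hN⟩ := h𝓧.exists_matroid_indep_iff_erectionIndep
  have : N.Finite := ⟨hNE ▸ M.ground_finite⟩
  have hmrk : mrk N = mrk M + 1 := by
    obtain ⟨C, -, hC, hC𝓧⟩ := h𝓧.exists_isCircuit_subset_notMem hJE hJ
    obtain ⟨B, hB, hCB⟩ := ((hN C).2 (Or.inr ⟨hC, hC𝓧⟩)).exists_isBase_superset
    rw [← hB.ncard_eq_mrk]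
    exact (h𝓧.ncard_le_of_erectionIndep ((hN B).1 hB.indep)).antisymm
      (h𝓧.ncard_eq_of_isCircuit_notMem hC hC𝓧 ▸ ncard_le_ncard hCB hB.finite)
  refine ⟨N, ⟨hNE.symm, fun I => ?_⟩, Set.ext fun X => ⟨fun hX => ?_, fun ⟨hXE, hXr⟩ => ?_⟩⟩
  · rw [hN, hmrk, Nat.add_le_add_iff_right]
    refine ⟨fun hI => ⟨Or.inl hI, hI.ncard_le_mrk⟩, fun ⟨hI, hIr⟩ => hI.resolve_right ?_⟩
    rintro ⟨hC, hC𝓧⟩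
    have := h𝓧.ncard_eq_of_isCircuit_notMem hC hC𝓧
    omega
  · refine ⟨h𝓧E X hX, mrnk_le fun I hIX hI => ((hN I).1 hI).elim Indep.ncard_le_mrk ?_⟩
    exact fun hC => absurd (h𝓧.1 X hX I hIX) hC.2
  · by_contra hX
    obtain ⟨C, hCX, hC, hC𝓧⟩ := h𝓧.exists_isCircuit_subset_notMem hXE hX
    have := ((hN C).2 (Or.inr ⟨hC, hC𝓧⟩)).ncard_le_mrnk hCX
    have := h𝓧.ncard_eq_of_isCircuit_notMem hC hC𝓧
    omega

end CompleteWithRespectTo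

end PavingEnum

/-- A collection 𝓧 of subsets of E is complete with respect to M if and only if
𝓧 = { X ⊆ E : r_N(X) ≤ r } for some erection N of M. -/
theorem complete_iff_erection {α : Type*} (M : Matroid α) (r : ℕ)
    (hE : M.E.Finite) (hrk : mrk M = r) (hr : 1 ≤ r)
    (𝓧 : Set (Set α)) (h𝓧 : ∀ X ∈ 𝓧, X ⊆ M.E) :
    CompleteWithRespectTo M 𝓧 ↔
      ∃ N : Matroid α, IsErection N M ∧
        𝓧 = {X : Set α | X ⊆ M.E ∧ mrnk N X ≤ r} := by
  subst hrk
  have : M.Finite := ⟨hE⟩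
  constructor
  · intro hcomplete
    by_cases hmiss : ∃ J ⊆ M.E, J ∉ 𝓧
    · obtain ⟨J, hJE, hJ⟩ := hmiss
      obtain ⟨N, hT, h𝓧N⟩ := hcomplete.exists_isTruncationOf h𝓧 hJE hJ
      exact ⟨N, Or.inl hT, h𝓧N⟩
    · exact ⟨M, Or.inr rfl, Set.ext fun X => ⟨fun hX => ⟨h𝓧 X hX, mrnk_le_mrk X⟩,
        fun hX => not_not.1 fun hX𝓧 => hmiss ⟨X, hX.1, hX𝓧⟩⟩⟩
  · rintro ⟨N, hT | rfl, rfl⟩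
    · exact complete_of_isTruncationOf hT hr
    · exact complete_setOf_subset_ground
end

section
/- For all integers r and n with 2 ≤ r ≤ n, s(n,r) ≥ (1/(n−r+1)) · C(n,r) · D(r−1, r, n), the inequality being taken in the real numbers. (Indeed, deleting any single block from a Steiner system S(r−1,r,n) yields the collection of circuit-hyperplanes of a sparse paving matroid of rank r, and distinct pairs (system, deleted block) yield distinct matroids; each system has exactly (1/(n−r+1))·C(n,r) blocks.) -/
open Matroid Set Filter Real

namespace PavingEnum

/-- A Steiner system S(r−1, r, n): a collection of r-element subsets (blocks) of
`{1, …, n}` such that every (r−1)-element subset is contained in exactly one block. -/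
def IsSteinerSystem (n r : ℕ) (𝓑 : Finset (Finset (Fin n))) : Prop :=
  (∀ B ∈ 𝓑, B.card = r) ∧
  ∀ T : Finset (Fin n), T.card = r - 1 → ∃! B, B ∈ 𝓑 ∧ T ⊆ B

/-- `numSteiner n r` : the number of Steiner systems S(r−1, r, n). -/
noncomputable def numSteiner (n r : ℕ) : ℕ :=
  {𝓑 : Finset (Finset (Fin n)) | IsSteinerSystem n r 𝓑}.ncard

end PavingEnum

open PavingEnum

/-!
Deleting a block `B₀` from a Steiner system `S(r-1, r, n)` leaves a family of `r`-sets no two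
of which share `r-1` elements. Declaring exactly these sets dependent among the sets of size at
most `r` gives a sparse paving matroid of rank `r`: `B₀` is a base, and dually any `r+1`
elements contain an `r`-set outside the family. The matroid recovers the family, and the family
recovers `B₀`, since every `(r-1)`-subset of `B₀` lies in no other block. Double counting shows
that every Steiner system has `C(n, r-1) / r = C(n, r) / (n-r+1)` blocks.
-/

namespace PavingEnum

open Set

variable {α : Type*}

theorem mrk_eq_ncard_of_isBase {M : Matroid α} {B : Set α} (hB : M.IsBase B) :
    mrk M = B.ncard := by
  have : {k | ∃ B', M.IsBase B' ∧ B'.ncard = k} = {B.ncard} := by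
    ext k
    refine ⟨?_, fun hk => ⟨B, hB, hk.symm⟩⟩
    rintro ⟨B', hB', rfl⟩
    exact hB'.ncard_eq_ncard_of_isBase hB
  rw [mrk, this, csSup_singleton]

theorem paving_of_forall_dep [Finite α] {M : Matroid α}
    (h : ∀ D, M.Dep D → mrk M ≤ D.ncard) : Paving M := fun C hC => by
  rw [← C.toFinite.cast_ncard_eq]
  exact_mod_cast h C hC.1

instance [Finite α] : Finite (Matroid α) :=
  Finite.of_injective (fun M : Matroid α => (M.E, M.Indep)) fun M N h => by
    simp only [Prod.mk.injEq] at h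
    exact Matroid.ext_indep h.1 fun I _ => by rw [h.2]

/-- Stable sets of the Johnson graph `J(α, r)`; they are exactly the families of
circuit-hyperplanes of the sparse paving matroids of rank `r` on `α`. -/
structure IsJohnsonStable (r : ℕ) (𝓕 : Set (Set α)) : Prop where
  ncard_eq : ∀ A ∈ 𝓕, A.ncard = r
  eq_of_subset : ∀ ⦃A B T⦄, A ∈ 𝓕 → B ∈ 𝓕 → T ⊆ A → T ⊆ B → T.ncard + 1 = r → A = B

namespace IsJohnsonStable

variable {r : ℕ} {𝓕 : Set (Set α)} {A B I J S : Set α}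

theorem mono {𝓖 : Set (Set α)} (h : IsJohnsonStable r 𝓕) (h𝓖 : 𝓖 ⊆ 𝓕) :
    IsJohnsonStable r 𝓖 :=
  ⟨fun A hA => h.ncard_eq A (h𝓖 hA), fun _ _ _ hA hB => h.eq_of_subset (h𝓖 hA) (h𝓖 hB)⟩

theorem notMem_of_ncard_ne (h : IsJohnsonStable r 𝓕) (hA : A.ncard ≠ r) : A ∉ 𝓕 :=
  fun hA𝓕 => hA (h.ncard_eq A hA𝓕)

theorem eq_of_insert_mem (h : IsJohnsonStable r 𝓕) {a b : α} (hI : I.ncard + 1 = r)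
    (ha : insert a I ∈ 𝓕) (hb : insert b I ∈ 𝓕) (haI : a ∉ I) : a = b := by
  have hab := h.eq_of_subset ha hb (subset_insert a I) (subset_insert b I) hI
  exact (hab ▸ mem_insert a I : a ∈ insert b I).resolve_right haI

theorem exists_subset_ncard_eq_notMem (h : IsJohnsonStable r 𝓕) (hr : r ≠ 0)
    (hS : r + 1 ≤ S.ncard) : ∃ B ⊆ S, B.ncard = r ∧ B ∉ 𝓕 := by
  obtain ⟨S', hS'S, hS'⟩ := exists_subset_card_eq hS
  have hfin : S'.Finite := finite_of_ncard_pos (by omega)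
  obtain ⟨x, hx, y, hy, hxy⟩ := (one_lt_ncard hfin).1 (by omega)
  by_contra! hmem
  have hcard {z} (hz : z ∈ S') : (S' \ {z}).ncard = r := by
    rw [ncard_sdiff_singleton_of_mem hz]
    omega
  have hx𝓕 := hmem _ (sdiff_subset.trans hS'S) (hcard hx)
  have hy𝓕 := hmem _ (sdiff_subset.trans hS'S) (hcard hy)
  have hT : (S' \ {x, y}).ncard + 1 = r := by
    rw [ncard_sdiff (by simp [insert_subset_iff, hx, hy]), ncard_pair hxy]
    omega
  have hxy𝓕 := h.eq_of_subset hx𝓕 hy𝓕 (sdiff_subset_sdiff_right (by simp))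
    (sdiff_subset_sdiff_right (by simp)) hT
  have hyx : y ∈ S' \ {x} := ⟨hy, Ne.symm hxy⟩
  exact (hxy𝓕 ▸ hyx).2 rfl

variable [Finite α]

theorem indep_subset (h : IsJohnsonStable r 𝓕) (hJ : J.ncard ≤ r ∧ J ∉ 𝓕) (hIJ : I ⊆ J) :
    I.ncard ≤ r ∧ I ∉ 𝓕 := by
  have hle := ncard_le_ncard hIJ
  refine ⟨hle.trans hJ.1, fun hI => hJ.2 ?_⟩
  rwa [← eq_of_subset_of_ncard_le hIJ (by rw [h.ncard_eq I hI]; exact hJ.1)]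

theorem indep_aug (h : IsJohnsonStable r 𝓕) (hI : I.ncard ≤ r ∧ I ∉ 𝓕)
    (hJ : J.ncard ≤ r ∧ J ∉ 𝓕) (hIJ : I.ncard < J.ncard) :
    ∃ e ∈ J, e ∉ I ∧ (insert e I).ncard ≤ r ∧ insert e I ∉ 𝓕 := by
  obtain ⟨e, heJ, heI⟩ : (J \ I).Nonempty :=
    sdiff_nonempty.2 fun hJI => (ncard_le_ncard hJI).not_gt hIJ
  by_cases hlt : I.ncard + 1 < r
  · refine ⟨e, heJ, heI, ?_, h.notMem_of_ncard_ne ?_⟩ <;> rw [ncard_insert_of_notMem heI] <;> omega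
  by_contra! hmem
  have hIr : I.ncard + 1 = r := by omega
  have hmem' {f} (hfJ : f ∈ J) (hfI : f ∉ I) : insert f I ∈ 𝓕 :=
    hmem f hfJ hfI (by rw [ncard_insert_of_notMem hfI]; omega)
  -- two elements of `J \ I` would give two members of `𝓕` through the `(r-1)`-set `I`
  have hJe : J ⊆ insert e I := fun f hfJ => by
    by_cases hfI : f ∈ I
    · exact mem_insert_of_mem e hfI
    · exact h.eq_of_insert_mem hIr (hmem' hfJ hfI) (hmem' heJ heI) hfI ▸ mem_insert f I
  have hJeq : J = insert e I :=
    eq_of_subset_of_ncard_le hJe (by rw [ncard_insert_of_notMem heI]; omega)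
  exact hJ.2 (hJeq ▸ hmem' heJ heI)

/-- The sparse paving matroid whose circuit-hyperplanes are the members of `𝓕`. -/
protected noncomputable def matroid (h : IsJohnsonStable r 𝓕) (hr : r ≠ 0) : Matroid α :=
  (IndepMatroid.ofFinite finite_univ (fun I => I.ncard ≤ r ∧ I ∉ 𝓕)
    ⟨by simp, h.notMem_of_ncard_ne (by simpa using hr.symm)⟩
    (fun _ _ hJ hIJ => h.indep_subset hJ hIJ) (fun _ _ hI hJ hIJ => h.indep_aug hI hJ hIJ)
    (fun I _ => subset_univ I)).matroid

variable (h : IsJohnsonStable r 𝓕) (hr : r ≠ 0)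

@[simp] theorem matroid_E : (h.matroid hr).E = univ := rfl

@[simp] theorem matroid_indep_iff : (h.matroid hr).Indep I ↔ I.ncard ≤ r ∧ I ∉ 𝓕 := Iff.rfl

theorem mem_iff_not_indep : A ∈ 𝓕 ↔ A.ncard = r ∧ ¬(h.matroid hr).Indep A := by
  rw [matroid_indep_iff]
  exact ⟨fun hA => ⟨h.ncard_eq A hA, fun hA' => hA'.2 hA⟩, fun hA => by
    by_contra hA𝓕
    exact hA.2 ⟨hA.1.le, hA𝓕⟩⟩

theorem eq_of_matroid_eq {𝓖 : Set (Set α)} (h' : IsJohnsonStable r 𝓖)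
    (heq : h.matroid hr = h'.matroid hr) : 𝓕 = 𝓖 := by
  ext A
  rw [h.mem_iff_not_indep hr, h'.mem_iff_not_indep hr, heq]

theorem matroid_isBase (hB : B.ncard = r) (hB𝓕 : B ∉ 𝓕) : (h.matroid hr).IsBase B := by
  rw [Matroid.isBase_iff_maximal_indep]
  exact ⟨⟨hB.le, hB𝓕⟩, fun _ hJ hBJ => (eq_of_subset_of_ncard_le hBJ (hB ▸ hJ.1)).ge⟩

variable {h hr}

theorem mrk_matroid (hB : B.ncard = r) (hB𝓕 : B ∉ 𝓕) : mrk (h.matroid hr) = r := by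
  rw [mrk_eq_ncard_of_isBase (h.matroid_isBase hr hB hB𝓕), hB]

theorem mrk_dual_matroid (hB : B.ncard = r) (hB𝓕 : B ∉ 𝓕) :
    mrk (h.matroid hr)✶ = Nat.card α - r := by
  rw [mrk_eq_ncard_of_isBase (h.matroid_isBase hr hB hB𝓕).compl_isBase_dual, matroid_E,
    ← compl_eq_univ_sdiff, ncard_compl, hB]

theorem sparsePaving_matroid (hB : B.ncard = r) (hB𝓕 : B ∉ 𝓕) :
    SparsePaving (h.matroid hr) := by
  refine ⟨paving_of_forall_dep fun D hD => ?_, paving_of_forall_dep fun D hD => ?_⟩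
  · rw [mrk_matroid hB hB𝓕]
    by_contra! hlt
    exact hD.not_indep ⟨hlt.le, h.notMem_of_ncard_ne hlt.ne⟩
  · rw [mrk_dual_matroid hB hB𝓕]
    by_contra! hlt
    obtain ⟨B', hB'D, hB', hB'𝓕⟩ :=
      h.exists_subset_ncard_eq_notMem hr (S := Dᶜ) (by rw [ncard_compl]; omega)
    exact hD.not_indep (Matroid.dual_indep_iff_exists'.2
      ⟨subset_univ D, B', h.matroid_isBase hr hB' hB'𝓕, subset_compl_iff_disjoint_left.1 hB'D⟩)

end IsJohnsonStable

namespace IsSteinerSystem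

variable {n r : ℕ} {𝓑 𝓑₁ 𝓑₂ : Finset (Finset (Fin n))} {A B B₀ B₁ B₂ T : Finset (Fin n)}

theorem eq_of_subset (hS : IsSteinerSystem n r 𝓑) (hA : A ∈ 𝓑) (hB : B ∈ 𝓑) (hTA : T ⊆ A)
    (hTB : T ⊆ B) (hT : T.card = r - 1) : A = B :=
  (hS.2 T hT).unique ⟨hA, hTA⟩ ⟨hB, hTB⟩

theorem card_mul_eq_choose (hS : IsSteinerSystem n r 𝓑) (hr : r ≠ 0) :
    𝓑.card * r = n.choose (r - 1) := by
  classical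
  have hblock : ∀ B ∈ 𝓑,
      ((Finset.univ.powersetCard (r - 1)).bipartiteAbove (fun B T => T ⊆ B) B).card = r := by
    intro B hB
    have : (Finset.univ.powersetCard (r - 1)).bipartiteAbove (fun B T => T ⊆ B) B =
        B.powersetCard (r - 1) := by
      ext T
      simp [Finset.mem_bipartiteAbove, Finset.mem_powersetCard, and_comm]
    rw [this, Finset.card_powersetCard, hS.1 B hB,
      Nat.choose_symm_of_eq_add (show r = r - 1 + 1 by omega), Nat.choose_one_right]
  have hcover : ∀ T ∈ Finset.univ.powersetCard (r - 1),
      (𝓑.bipartiteBelow (fun B T => T ⊆ B) T).card = 1 := by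
    intro T hT
    rw [Finset.card_eq_one_iff_existsUnique]
    simpa [Finset.mem_bipartiteBelow] using hS.2 T (Finset.mem_powersetCard.1 hT).2
  rw [Finset.card_mul_eq_card_mul _ hblock hcover, Finset.card_powersetCard, Finset.card_univ,
    Fintype.card_fin, mul_one]

theorem card_eq_card (hS₁ : IsSteinerSystem n r 𝓑₁) (hS₂ : IsSteinerSystem n r 𝓑₂)
    (hr : r ≠ 0) : 𝓑₁.card = 𝓑₂.card :=
  Nat.eq_of_mul_eq_mul_right (Nat.pos_of_ne_zero hr)
    ((hS₁.card_mul_eq_choose hr).trans (hS₂.card_mul_eq_choose hr).symm)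

theorem card_eq (hS : IsSteinerSystem n r 𝓑) (hr : r ≠ 0) (hrn : r ≤ n) :
    (𝓑.card : ℝ) = 1 / (n - r + 1) * n.choose r := by
  have hchoose := Nat.choose_succ_right_eq n (r - 1)
  rw [Nat.sub_add_cancel (Nat.one_le_iff_ne_zero.2 hr), ← hS.card_mul_eq_choose hr,
    show n - (r - 1) = n - r + 1 by omega] at hchoose
  have hpos : (0 : ℝ) < n - r + 1 := by linarith [(Nat.cast_le (α := ℝ)).2 hrn]
  have hchooseℝ : (n.choose r : ℝ) = 𝓑.card * (n - r + 1) := by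
    have := congrArg (Nat.cast (R := ℝ)) hchoose
    push_cast [Nat.cast_sub hrn] at this
    exact mul_right_cancel₀ (Nat.cast_ne_zero.2 hr) (by linarith)
  rw [hchooseℝ]
  field_simp

theorem isJohnsonStable (hS : IsSteinerSystem n r 𝓑) :
    IsJohnsonStable r (SetLike.coe '' (𝓑 : Set (Finset (Fin n)))) := by
  refine ⟨?_, ?_⟩
  · rintro _ ⟨B, hB, rfl⟩
    rw [Set.ncard_coe_finset]
    exact hS.1 B hB
  · rintro _ _ T ⟨A, hA, rfl⟩ ⟨B, hB, rfl⟩ hTA hTB hT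
    lift T to Finset (Fin n) using T.toFinite
    rw [Set.ncard_coe_finset] at hT
    rw [hS.eq_of_subset hA hB (Finset.coe_subset.1 hTA) (Finset.coe_subset.1 hTB) (by omega)]

theorem subset_of_erase_eq (hr : 2 ≤ r) (hS₁ : IsSteinerSystem n r 𝓑₁)
    (hS₂ : IsSteinerSystem n r 𝓑₂) (hB₁ : B₁ ∈ 𝓑₁) (h : 𝓑₁.erase B₁ = 𝓑₂.erase B₂) :
    B₁ ⊆ B₂ := by
  intro x hx
  obtain ⟨y, hy, hyx⟩ := Finset.exists_mem_ne (by rw [hS₁.1 B₁ hB₁]; omega) x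
  have hT : (B₁.erase y).card = r - 1 := by rw [Finset.card_erase_of_mem hy, hS₁.1 B₁ hB₁]
  obtain ⟨A, ⟨hA, hTA⟩, -⟩ := hS₂.2 _ hT
  have hAB₂ : A = B₂ := by
    by_contra hAB₂
    have hA₁ : A ∈ 𝓑₁.erase B₁ := h ▸ Finset.mem_erase.2 ⟨hAB₂, hA⟩
    exact Finset.ne_of_mem_erase hA₁
      (hS₁.eq_of_subset (Finset.mem_of_mem_erase hA₁) hB₁ hTA (Finset.erase_subset y B₁) hT)
  exact hAB₂ ▸ hTA (Finset.mem_erase.2 ⟨Ne.symm hyx, hx⟩)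

theorem eq_of_erase_eq (hr : 2 ≤ r) (hS₁ : IsSteinerSystem n r 𝓑₁)
    (hS₂ : IsSteinerSystem n r 𝓑₂) (hB₁ : B₁ ∈ 𝓑₁) (hB₂ : B₂ ∈ 𝓑₂)
    (h : 𝓑₁.erase B₁ = 𝓑₂.erase B₂) : 𝓑₁ = 𝓑₂ ∧ B₁ = B₂ := by
  have hB : B₁ = B₂ := (subset_of_erase_eq hr hS₁ hS₂ hB₁ h).antisymm
    (subset_of_erase_eq hr hS₂ hS₁ hB₂ h.symm)
  refine ⟨?_, hB⟩
  rw [← Finset.insert_erase hB₁, ← Finset.insert_erase hB₂, h, hB]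

noncomputable def deleteBlockMatroid (hS : IsSteinerSystem n r 𝓑) (hr : r ≠ 0)
    (B₀ : Finset (Fin n)) : Matroid (Fin n) :=
  (hS.isJohnsonStable.mono (Set.image_mono (Finset.coe_subset.2 (𝓑.erase_subset B₀)))).matroid hr

theorem sparsePaving_deleteBlockMatroid (hS : IsSteinerSystem n r 𝓑) (hr : r ≠ 0) (hB₀ : B₀ ∈ 𝓑) :
    (hS.deleteBlockMatroid hr B₀).E = Set.univ ∧ mrk (hS.deleteBlockMatroid hr B₀) = r ∧
      SparsePaving (hS.deleteBlockMatroid hr B₀) := by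
  have hB₀r : (B₀ : Set (Fin n)).ncard = r := by rw [Set.ncard_coe_finset, hS.1 B₀ hB₀]
  have hB₀𝓕 : (B₀ : Set (Fin n)) ∉ SetLike.coe '' (↑(𝓑.erase B₀) : Set (Finset (Fin n))) := by
    rintro ⟨B, hB, hBB₀⟩
    exact Finset.ne_of_mem_erase hB (Finset.coe_injective hBB₀)
  exact ⟨rfl, IsJohnsonStable.mrk_matroid hB₀r hB₀𝓕,
    IsJohnsonStable.sparsePaving_matroid hB₀r hB₀𝓕⟩

theorem deleteBlockMatroid_inj (hr : 2 ≤ r) (hS₁ : IsSteinerSystem n r 𝓑₁)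
    (hS₂ : IsSteinerSystem n r 𝓑₂) (hB₁ : B₁ ∈ 𝓑₁) (hB₂ : B₂ ∈ 𝓑₂)
    (h : hS₁.deleteBlockMatroid (by omega) B₁ = hS₂.deleteBlockMatroid (by omega) B₂) :
    𝓑₁ = 𝓑₂ ∧ B₁ = B₂ := by
  refine eq_of_erase_eq hr hS₁ hS₂ hB₁ hB₂ (Finset.coe_injective ?_)
  exact (Set.image_injective.2 Finset.coe_injective) (IsJohnsonStable.eq_of_matroid_eq _ _ _ h)

end IsSteinerSystem

theorem numSteiner_mul_le {n r b : ℕ} (hr : 2 ≤ r)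
    (hb : ∀ 𝓑, IsSteinerSystem n r 𝓑 → 𝓑.card = b) :
    numSteiner n r * b ≤ numSparsePaving n r := by
  classical
  have hr0 : r ≠ 0 := by omega
  let 𝒮 := {𝓑 | IsSteinerSystem n r 𝓑}.toFinset
  let f (p : Σ _ : Finset (Finset (Fin n)), Finset (Fin n)) : Matroid (Fin n) :=
    if hS : IsSteinerSystem n r p.1 then hS.deleteBlockMatroid hr0 p.2 else Matroid.emptyOn _
  calc numSteiner n r * b = (𝒮.sigma fun 𝓑 => 𝓑).card := by
        rw [Finset.card_sigma, Finset.sum_congr rfl fun 𝓑 h𝓑 => hb 𝓑 (by simpa [𝒮] using h𝓑),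
          Finset.sum_const, smul_eq_mul, numSteiner, Set.ncard_eq_toFinset_card']
    _ ≤ numSparsePaving n r := by
      rw [numSparsePaving, ← Set.ncard_coe_finset]
      refine Set.ncard_le_ncard_of_injOn f ?_ ?_ (Set.toFinite _)
      · rintro ⟨𝓑, B⟩ hp
        simp only [Finset.coe_sigma, Set.mem_sigma_iff, Finset.mem_coe, 𝒮,
          Set.mem_toFinset, Set.mem_ofPred_eq] at hp
        simp only [f, dif_pos hp.1]
        exact hp.1.sparsePaving_deleteBlockMatroid hr0 hp.2
      · rintro ⟨𝓑₁, B₁⟩ hp ⟨𝓑₂, B₂⟩ hq hpq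
        simp only [Finset.coe_sigma, Set.mem_sigma_iff, Finset.mem_coe, 𝒮,
          Set.mem_toFinset, Set.mem_ofPred_eq] at hp hq
        simp only [f, dif_pos hp.1, dif_pos hq.1] at hpq
        obtain ⟨rfl, rfl⟩ := IsSteinerSystem.deleteBlockMatroid_inj hr hp.1 hq.1 hp.2 hq.2 hpq
        rfl

end PavingEnum

/-- For 2 ≤ r ≤ n, s(n,r) ≥ (1/(n−r+1)) · C(n,r) · D(r−1, r, n). -/
theorem sparse_paving_vs_steiner (n r : ℕ) (hr : 2 ≤ r) (hrn : r ≤ n) :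
    (1 / ((n : ℝ) - r + 1)) * (n.choose r : ℝ) * (numSteiner n r : ℝ) ≤
      (numSparsePaving n r : ℝ) := by
  rcases {𝓑 | IsSteinerSystem n r 𝓑}.eq_empty_or_nonempty with hS | ⟨𝓑, hS⟩
  · simp [numSteiner, hS]
  · calc _ = ((numSteiner n r * 𝓑.card : ℕ) : ℝ) := by
          rw [Nat.cast_mul, hS.card_eq (by omega) hrn]
          ring
      _ ≤ numSparsePaving n r := by
          exact_mod_cast numSteiner_mul_le hr fun 𝓑' hS' => hS'.card_eq_card hS (by omega)
end
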